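/- Let Π be a 3-SAT instance with m clauses and n variables in which each variable xᵢ occurs exactly once unnegated (in clause rᵢ) and exactly twice negated (in clauses sᵢ < tᵢ). Then Π is satisfiable if and only if for each i one can choose ℓᵢ ∈ {0, 2^{rᵢ}, 2^{sᵢ} + 2^{tᵢ}, 2^{sᵢ}, 2^{tᵢ}} such that ℓ₁ ⊕ ℓ₂ ⊕ ⋯ ⊕ ℓₙ = 2^{m+1} − 2, with the additional constraint that if ℓᵢ = 2^{rᵢ} we call xᵢ true (and this choice may only 'cover' clause rᵢ), while the choices 2^{sᵢ}+2^{tᵢ}, 2^{sᵢ}, 2^{tᵢ}, 0 correspond to xᵢ false. Here ⊕ is bitwise XOR. -/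

import Mathlib

section
universe u
/-- Reconstruction of Mathlib's former `Nimber` (removed from Mathlib): a type synonym of
`Ordinal` with the ordinal order and `1`. -/
def Nimber : Type (u + 1) := Ordinal.{u}
noncomputable instance : ConditionallyCompleteLinearOrderBot Nimber :=
  inferInstanceAs (ConditionallyCompleteLinearOrderBot Ordinal)
instance : One Nimber := inferInstanceAs (One Ordinal)
end

namespace SetTheory
universe u
/-- Reconstruction of Mathlib's former `SetTheory.PGame` (removed from Mathlib). -/
inductive PGame : Type (u + 1)
  | mk : ∀ α β : Type u, (α → PGame) → (β → PGame) → PGame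
namespace PGame
def LeftMoves : PGame → Type u
  | mk l _ _ _ => l
def RightMoves : PGame → Type u
  | mk _ r _ _ => r
def moveLeft : ∀ g : PGame, LeftMoves g → PGame
  | mk _l _ L _ => L
def moveRight : ∀ g : PGame, RightMoves g → PGame
  | mk _ _r _ R => R
inductive IsOption : PGame → PGame → Prop
  | moveLeft (x : PGame) (i : x.LeftMoves) : IsOption (x.moveLeft i) x
  | moveRight (x : PGame) (i : x.RightMoves) : IsOption (x.moveRight i) x
theorem wf_isOption : WellFounded IsOption :=
  ⟨fun x => by
    induction x with
    | mk l r L R IHl IHr =>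
      refine Acc.intro _ fun y h => ?_
      cases h with
      | moveLeft _ i => exact IHl i
      | moveRight _ j => exact IHr j⟩
def Subsequent : PGame → PGame → Prop :=
  Relation.TransGen IsOption
theorem wf_subsequent : WellFounded Subsequent :=
  ⟨fun x => Acc.transGen (wf_isOption.apply x)⟩
instance : WellFoundedRelation PGame :=
  ⟨_, wf_subsequent⟩
instance : Zero PGame :=
  ⟨⟨PEmpty, PEmpty, PEmpty.elim, PEmpty.elim⟩⟩
instance le : LE PGame :=
  ⟨Sym2.GameAdd.recursion wf_isOption fun x y le =>
      (∀ i, ¬le y (x.moveLeft i) (Sym2.GameAdd.snd_fst <| IsOption.moveLeft x i)) ∧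
        ∀ j, ¬le (y.moveRight j) x (Sym2.GameAdd.fst_snd <| IsOption.moveRight y j)⟩
instance : LT PGame :=
  ⟨fun x y => x ≤ y ∧ ¬y ≤ x⟩
def neg : PGame → PGame
  | ⟨l, r, L, R⟩ => ⟨r, l, fun i => neg (R i), fun i => neg (L i)⟩
instance : Neg PGame :=
  ⟨neg⟩
def add (x y : PGame.{u}) : PGame.{u} :=
  match x, y with
  | mk xl xr xL xR, mk yl yr yL yR =>
    mk (xl ⊕ yl) (xr ⊕ yr)
      (Sum.elim (fun i => add (xL i) (mk yl yr yL yR)) (fun i => add (mk xl xr xL xR) (yL i)))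
      (Sum.elim (fun i => add (xR i) (mk yl yr yL yR)) (fun i => add (mk xl xr xL xR) (yR i)))
termination_by (x, y)
decreasing_by
  all_goals first
  | exact Prod.Lex.left _ _ (Relation.TransGen.single (IsOption.moveLeft (mk _ _ _ _) _))
  | exact Prod.Lex.left _ _ (Relation.TransGen.single (IsOption.moveRight (mk _ _ _ _) _))
  | exact Prod.Lex.right _ (Relation.TransGen.single (IsOption.moveLeft (mk _ _ _ _) _))
  | exact Prod.Lex.right _ (Relation.TransGen.single (IsOption.moveRight (mk _ _ _ _) _))
instance : Add PGame.{u} :=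
  ⟨add⟩
instance : Sub PGame :=
  ⟨fun x y => x + -y⟩
def star : PGame.{u} :=
  ⟨PUnit, PUnit, fun _ => 0, fun _ => 0⟩
noncomputable def nim (o : Ordinal.{u}) : PGame.{u} :=
  ⟨o.ToType, o.ToType,
    fun x => nim (Ordinal.ToType.mk.symm x).val,
    fun x => nim (Ordinal.ToType.mk.symm x).val⟩
termination_by o
decreasing_by all_goals exact (Ordinal.ToType.mk.symm x).prop
end PGame
end SetTheory

open SetTheory PGame

universe u

/-- The four outcome classes of a combinatorial game. -/
inductive Outcome : Type
  | L | N | P | R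
deriving DecidableEq

/-- The partial order on outcomes: `R` least, `L` greatest, `N` and `P` incomparable. -/
def Outcome.leB : Outcome → Outcome → Bool
  | .R, _ => true
  | _, .L => true
  | .N, .N => true
  | .P, .P => true
  | _, _ => false

instance : PartialOrder Outcome where
  le a b := Outcome.leB a b = true
  le_refl a := by cases a <;> rfl
  le_trans a b c := by cases a <;> cases b <;> cases c <;> simp [Outcome.leB]
  le_antisymm a b := by cases a <;> cases b <;> simp [Outcome.leB]

/-- `misereWins true G` : Left, moving first, wins `G` under misère play;
`misereWins false G` : Right, moving first, wins `G` under misère play.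
(Under misère play, a player who cannot move wins.) -/
def misereWins : Bool → SetTheory.PGame.{u} → Prop
  | true, G => IsEmpty G.LeftMoves ∨ ∃ i, ¬ misereWins false (G.moveLeft i)
  | false, G => IsEmpty G.RightMoves ∨ ∃ j, ¬ misereWins true (G.moveRight j)
termination_by _ G => G
decreasing_by all_goals first
  | exact Relation.TransGen.single (IsOption.moveLeft _ _)
  | exact Relation.TransGen.single (IsOption.moveRight _ _)

/-- Build an outcome class from the propositions "Left moving first wins" and
"Right moving first wins". -/
noncomputable def outcomeOf (LF RF : Prop) : Outcome := by
  classical exact if LF then (if RF then .N else .L) else (if RF then .R else .P)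

/-- The normal-play outcome `o⁺(G)` of a game. -/
noncomputable def normalOutcome (G : PGame) : Outcome :=
  outcomeOf (¬ G ≤ 0) (¬ 0 ≤ G)

/-- The misère-play outcome `o⁻(G)` of a game. -/
noncomputable def misereOutcome (G : PGame) : Outcome :=
  outcomeOf (misereWins true G) (misereWins false G)

/-- The ordinal sum `G : H` of two games: either move in `G` (destroying the `H` part),
or move in `H` keeping the base `G`. -/
def ordinalSum (G : PGame.{u}) : PGame.{u} → PGame.{u}
  | H => PGame.mk (G.LeftMoves ⊕ H.LeftMoves) (G.RightMoves ⊕ H.RightMoves)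
      (Sum.elim G.moveLeft fun i => ordinalSum G (H.moveLeft i))
      (Sum.elim G.moveRight fun j => ordinalSum G (H.moveRight j))
termination_by H => H
decreasing_by all_goals first
  | exact Relation.TransGen.single (IsOption.moveLeft _ _)
  | exact Relation.TransGen.single (IsOption.moveRight _ _)

/-- The game `↑` (up) `= {0 | *}`. -/
def up : PGame.{u} := ⟨PUnit, PUnit, fun _ => 0, fun _ => star⟩

/-- `n` copies of `↑` added together. -/
def nUp : ℕ → PGame.{u}
  | 0 => 0
  | n + 1 => nUp n + up

/-- The integer multiple `w·↑`. -/
def upMul : ℤ → PGame.{u}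
  | .ofNat k => nUp k
  | .negSucc k => -(nUp (k + 1))

/-- Finite disjunctive sum of a family of games. -/
def psum : {k : ℕ} → (Fin k → PGame.{u}) → PGame.{u}
  | 0, _ => 0
  | k + 1, f => psum (fun i : Fin k => f i.castSucc) + f (Fin.last k)

/-- The superstar `{*x₁, …, *xₙ}`: the impartial game whose Left and Right options are
exactly the nimbers `*xᵢ`. -/
noncomputable def superstar {n : ℕ} (x : Fin n → ℕ) : PGame :=
  ⟨Fin n, Fin n, fun i => nim (x i), fun i => nim (x i)⟩

/-- The minimum excludant of a set of naturals. -/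
noncomputable def setMex (S : Set ℕ) : ℕ := sInf {n | n ∉ S}

/-- Iterated XOR (nim-sum) of a finite family of naturals. -/
def xorSum : {k : ℕ} → (Fin k → ℕ) → ℕ
  | 0, _ => 0
  | k + 1, f => xorSum (fun i : Fin k => f i.castSucc) ^^^ f (Fin.last k)

/-- A set of naturals is star-closed if it is closed under XOR with 1. -/
def StarClosedN (S : Set ℕ) : Prop := ∀ a ∈ S, a ^^^ 1 ∈ S

/-- `G` is all-small (dicotic): in every subposition, either both players can move
or neither can. -/
def AllSmall (G : PGame) : Prop :=
  (Nonempty G.LeftMoves ↔ Nonempty G.RightMoves) ∧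
    ∀ p, Subsequent p G → (Nonempty p.LeftMoves ↔ Nonempty p.RightMoves)

/-- `G` has (integer) atomic weight `w`, via the remote-star characterization:
for all sufficiently remote `N`, `*N + ↓ < G - w·↑ < *N + ↑`. -/
def HasIntAtomicWeight (G : PGame) (w : ℤ) : Prop :=
  ∃ N₀ : ℕ, ∀ N : ℕ, N₀ ≤ N →
    nim N + (-up) < G - upMul w ∧ G - upMul w < nim N + up

open Classical in
/-- The misère Grundy value of an (impartial) game: the mex of the misère Grundy values
of its options, except that the empty game has misère Grundy value `1`. -/
noncomputable def misereGrundy : PGame.{u} → Nimber.{u}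
  | G =>
    if IsEmpty G.LeftMoves then 1
    else sInf (Set.range fun i => misereGrundy (G.moveLeft i))ᶜ
termination_by G => G
decreasing_by all_goals first
  | exact Relation.TransGen.single (IsOption.moveLeft _ _)
  | exact Relation.TransGen.single (IsOption.moveRight _ _)

/-- A set of games closed under disjunctive sum and under taking subpositions. -/
def SClosed (A : Set PGame) : Prop :=
  (∀ G ∈ A, ∀ H ∈ A, G + H ∈ A) ∧ ∀ G ∈ A, ∀ G', Subsequent G' G → G' ∈ A

/-- `K` is an evil kernel of `A`: setting `G* = G` for `G ∈ K` and `G* = G + *` otherwise,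
one has `o⁺(G) = o⁻(G*)` and `o⁻(G) = o⁺(G*)` for all `G ∈ A`. -/
def IsEvilKernel (A K : Set PGame) : Prop :=
  K ⊆ A ∧ ∀ G ∈ A,
    (G ∈ K → normalOutcome G = misereOutcome G ∧ misereOutcome G = normalOutcome G) ∧
    (G ∉ K → normalOutcome G = misereOutcome (G + star) ∧
      misereOutcome G = normalOutcome (G + star))

/-- `(A, K)` is evilly normal: `A` is closed, `K` is an evil kernel of `A`, and
`G + H ∉ K ↔ (G ∉ K ∧ H ∉ K)` for all `G, H ∈ A`. -/
def EvillyNormal (A K : Set PGame) : Prop :=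
  SClosed A ∧ IsEvilKernel A K ∧ ∀ G ∈ A, ∀ H ∈ A, (G + H ∉ K ↔ G ∉ K ∧ H ∉ K)

/-- Normal-play equality of games: `G` and `H` have the same normal-play outcome in
every sum. -/
def NormalEq (G H : PGame) : Prop := ∀ X, normalOutcome (G + X) = normalOutcome (H + X)


section ThreeSatAux

def bXorSum : {k : ℕ} → (Fin k → Bool) → Bool
  | 0, _ => false
  | k + 1, f => (bXorSum (fun i : Fin k => f i.castSucc)) ^^ f (Fin.last k)

lemma testBit_xorSum : ∀ {k : ℕ} (f : Fin k → ℕ) (j : ℕ),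
    (xorSum f).testBit j = bXorSum (fun i => (f i).testBit j)
  | 0, f, j => by simp [xorSum, bXorSum]
  | k + 1, f, j => by
    simp only [xorSum, bXorSum, Nat.testBit_xor,
      testBit_xorSum (fun i : Fin k => f i.castSucc) j]

lemma bXorSum_eq_false : ∀ {k : ℕ} (f : Fin k → Bool), (∀ i, f i = false) → bXorSum f = false
  | 0, _, _ => rfl
  | k + 1, f, h => by
    simp [bXorSum, bXorSum_eq_false (fun i : Fin k => f i.castSucc) (fun i => h _),
      h (Fin.last k)]

lemma bXorSum_eq_true : ∀ {k : ℕ} (f : Fin k → Bool) (i0 : Fin k),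
    (∀ i, f i = true ↔ i = i0) → bXorSum f = true
  | 0, _, i0, _ => i0.elim0
  | k + 1, f, i0, h => by
    unfold bXorSum
    rcases Fin.eq_castSucc_or_eq_last i0 with ⟨j0, rfl⟩ | rfl
    · rw [bXorSum_eq_true (fun i : Fin k => f i.castSucc) j0
        (fun i => by rw [h]; exact ⟨fun hc => Fin.castSucc_injective _ hc,
          fun hc => by rw [hc]⟩)]
      have hl : f (Fin.last k) = false := by
        rw [← Bool.not_eq_true, h]
        exact fun hc => absurd hc.symm (Fin.castSucc_lt_last j0).ne
      simp [hl]
    · have hc : ∀ i : Fin k, f i.castSucc = false := fun i => by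
        rw [← Bool.not_eq_true, h]
        exact (Fin.castSucc_lt_last i).ne
      rw [bXorSum_eq_false _ hc, (h _).2 rfl]
      rfl

lemma testBit_target (m j : ℕ) : (2 ^ (m + 1) - 2).testBit j = decide (1 ≤ j ∧ j ≤ m) := by
  have h1 : 1 ≤ 2 ^ m := Nat.one_le_two_pow
  have h2 : 2 ^ (m + 1) - 2 = 2 * (2 ^ m - 1) := by
    have : (2:ℕ) ^ (m + 1) = 2 * 2 ^ m := by rw [pow_succ]; ring
    omega
  cases j with
  | zero => rw [h2]; simp [Nat.mul_mod_right]
  | succ j =>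
    rw [h2, Nat.testBit_add_one, Nat.mul_div_cancel_left _ (by norm_num),
      Nat.testBit_two_pow_sub_one]
    simp only [decide_eq_decide]
    omega

lemma testBit_pow_add_iff {a b : ℕ} (h : a < b) (j : ℕ) :
    (2 ^ a + 2 ^ b).testBit j = true ↔ (j = a ∨ j = b) := by
  have hb : 2 ^ a < 2 ^ b := Nat.pow_lt_pow_right one_lt_two h
  have he : 2 ^ a + 2 ^ b = 2 ^ b * 1 + 2 ^ a := by ring
  rw [he, Nat.testBit_two_pow_mul_add 1 hb j]
  by_cases hj : j < b
  · simp only [if_pos hj, Nat.testBit_two_pow, decide_eq_true_eq]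
    constructor
    · intro hh; omega
    · rintro (rfl | rfl) <;> omega
  · simp only [if_neg hj, Nat.testBit_one_eq_true_iff_self_eq_zero]
    omega

lemma two_pow_xor {a b : ℕ} (h : a < b) : 2 ^ a ^^^ 2 ^ b = 2 ^ a + 2 ^ b := by
  apply Nat.eq_of_testBit_eq
  intro j
  have h2 := testBit_pow_add_iff h j
  rw [Nat.testBit_xor, Bool.eq_iff_iff]
  by_cases ha : a = j <;> by_cases hb' : b = j <;>
    simp_all [Nat.testBit_two_pow] <;> omega

lemma pow_eq_pow {a b : ℕ} (h : (2:ℕ) ^ a = 2 ^ b) : a = b :=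
  Nat.pow_right_injective (le_refl 2) h


end ThreeSatAux

/-- a 3-SAT instance `Π` with `m` clauses (numbered `1..m`) and `n`
variables, where variable `xᵢ` occurs exactly once unnegated (in clause `r i`) and
twice negated (in clauses `s i < t i`), is satisfiable iff one can choose
`ℓᵢ ∈ {0, 2^(r i), 2^(s i) + 2^(t i), 2^(s i), 2^(t i)}` with
`ℓ₁ ⊕ ⋯ ⊕ ℓₙ = 2^(m+1) - 2`. -/
theorem threeSat_xor_reduction (n m : ℕ) (r s t : Fin n → ℕ)
    (hr : ∀ i, 1 ≤ r i ∧ r i ≤ m) (hs : ∀ i, 1 ≤ s i ∧ s i ≤ m)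
    (ht : ∀ i, 1 ≤ t i ∧ t i ≤ m) (hst : ∀ i, s i < t i) :
    (∃ τ : Fin n → Bool, ∀ j : ℕ, 1 ≤ j → j ≤ m →
        ∃ i, (τ i = true ∧ r i = j) ∨ (τ i = false ∧ (s i = j ∨ t i = j))) ↔
      (∃ l : Fin n → ℕ,
        (∀ i, l i = 0 ∨ l i = 2 ^ (r i) ∨ l i = 2 ^ (s i) + 2 ^ (t i) ∨
          l i = 2 ^ (s i) ∨ l i = 2 ^ (t i)) ∧
        xorSum l = 2 ^ (m + 1) - 2) := by
  constructor
  · rintro ⟨τ, H⟩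
    classical
    by_cases hn : Nonempty (Fin n)
    case neg =>
      have hm : m = 0 := by
        by_contra hm
        obtain ⟨i, -⟩ := H 1 le_rfl (by omega)
        exact hn ⟨i⟩
      refine ⟨fun _ => 0, fun i => Or.inl rfl, ?_⟩
      apply Nat.eq_of_testBit_eq
      intro j
      rw [testBit_xorSum, bXorSum_eq_false _ (fun i => by simp), testBit_target]
      exact (decide_eq_false (by omega)).symm
    obtain ⟨i₀⟩ := hn
    set wit : ℕ → Fin n := fun j =>
      if h : 1 ≤ j ∧ j ≤ m then (H j h.1 h.2).choose else i₀ with hwitdef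
    have hwit : ∀ j (h1 : 1 ≤ j) (h2 : j ≤ m),
        (τ (wit j) = true ∧ r (wit j) = j) ∨
          (τ (wit j) = false ∧ (s (wit j) = j ∨ t (wit j) = j)) := by
      intro j h1 h2
      have hw : wit j = (H j h1 h2).choose := by
        rw [hwitdef]; exact dif_pos ⟨h1, h2⟩
      rw [hw]
      exact (H j h1 h2).choose_spec
    set l : Fin n → ℕ := fun i =>
      (if τ i = true ∧ wit (r i) = i then 2 ^ r i else 0) ^^^
      ((if τ i = false ∧ wit (s i) = i then 2 ^ s i else 0) ^^^
       (if τ i = false ∧ wit (t i) = i then 2 ^ t i else 0)) with hldef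
    have key : ∀ i j, ((l i).testBit j = true) ↔
        ((τ i = true ∧ wit (r i) = i ∧ j = r i) ∨
         (τ i = false ∧ wit (s i) = i ∧ j = s i) ∨
         (τ i = false ∧ wit (t i) = i ∧ j = t i)) := by
      intro i j
      simp only [hldef]
      rcases Bool.eq_false_or_eq_true (τ i) with hτ | hτ
      · -- τ i = true
        have c2 : ¬(τ i = false ∧ wit (s i) = i) := fun hc => by
          rw [hτ] at hc; exact Bool.noConfusion hc.1
        have c3 : ¬(τ i = false ∧ wit (t i) = i) := fun hc => by
          rw [hτ] at hc; exact Bool.noConfusion hc.1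
        rw [if_neg c2, if_neg c3, Nat.zero_xor, Nat.xor_zero]
        by_cases h1 : wit (r i) = i
        · rw [if_pos ⟨hτ, h1⟩, Nat.testBit_two_pow]
          simp only [decide_eq_true_eq]
          constructor
          · intro hh; exact Or.inl ⟨hτ, h1, hh.symm⟩
          · rintro (⟨-, -, rfl⟩ | ⟨hf, -, -⟩ | ⟨hf, -, -⟩)
            · rfl
            · rw [hτ] at hf; exact Bool.noConfusion hf
            · rw [hτ] at hf; exact Bool.noConfusion hf
        · rw [if_neg (fun hc => h1 hc.2)]
          simp only [Nat.zero_testBit]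
          constructor
          · intro hh; exact Bool.noConfusion hh
          · rintro (⟨-, hw, -⟩ | ⟨hf, -, -⟩ | ⟨hf, -, -⟩)
            · exact absurd hw h1
            · rw [hτ] at hf; exact Bool.noConfusion hf
            · rw [hτ] at hf; exact Bool.noConfusion hf
      · -- τ i = false
        have c1 : ¬(τ i = true ∧ wit (r i) = i) := fun hc => by
          rw [hτ] at hc; exact Bool.noConfusion hc.1
        rw [if_neg c1, Nat.zero_xor]
        by_cases h2 : wit (s i) = i <;> by_cases h3 : wit (t i) = i
        · rw [if_pos ⟨hτ, h2⟩, if_pos ⟨hτ, h3⟩, two_pow_xor (hst i),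
            testBit_pow_add_iff (hst i)]
          constructor
          · rintro (rfl | rfl)
            · exact Or.inr (Or.inl ⟨hτ, h2, rfl⟩)
            · exact Or.inr (Or.inr ⟨hτ, h3, rfl⟩)
          · rintro (⟨hf, -, -⟩ | ⟨-, -, rfl⟩ | ⟨-, -, rfl⟩)
            · rw [hτ] at hf; exact Bool.noConfusion hf
            · exact Or.inl rfl
            · exact Or.inr rfl
        · rw [if_pos ⟨hτ, h2⟩, if_neg (fun hc => h3 hc.2), Nat.xor_zero,
            Nat.testBit_two_pow]
          simp only [decide_eq_true_eq]
          constructor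
          · intro hh; exact Or.inr (Or.inl ⟨hτ, h2, hh.symm⟩)
          · rintro (⟨hf, -, -⟩ | ⟨-, -, rfl⟩ | ⟨-, hw, -⟩)
            · rw [hτ] at hf; exact Bool.noConfusion hf
            · rfl
            · exact absurd hw h3
        · rw [if_neg (fun hc => h2 hc.2), if_pos ⟨hτ, h3⟩, Nat.zero_xor,
            Nat.testBit_two_pow]
          simp only [decide_eq_true_eq]
          constructor
          · intro hh; exact Or.inr (Or.inr ⟨hτ, h3, hh.symm⟩)
          · rintro (⟨hf, -, -⟩ | ⟨-, hw, -⟩ | ⟨-, -, rfl⟩)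
            · rw [hτ] at hf; exact Bool.noConfusion hf
            · exact absurd hw h2
            · rfl
        · rw [if_neg (fun hc => h2 hc.2), if_neg (fun hc => h3 hc.2), Nat.xor_zero]
          simp only [Nat.zero_testBit]
          constructor
          · intro hh; exact Bool.noConfusion hh
          · rintro (⟨hf, -, -⟩ | ⟨-, hw, -⟩ | ⟨-, hw, -⟩)
            · rw [hτ] at hf; exact Bool.noConfusion hf
            · exact absurd hw h2
            · exact absurd hw h3
    refine ⟨l, ?_, ?_⟩
    · intro i
      simp only [hldef]
      rcases Bool.eq_false_or_eq_true (τ i) with hτ | hτ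
      · -- τ i = true
        have c2 : ¬(τ i = false ∧ wit (s i) = i) := fun hc => by
          rw [hτ] at hc; exact Bool.noConfusion hc.1
        have c3 : ¬(τ i = false ∧ wit (t i) = i) := fun hc => by
          rw [hτ] at hc; exact Bool.noConfusion hc.1
        rw [if_neg c2, if_neg c3, Nat.zero_xor, Nat.xor_zero]
        by_cases h1 : wit (r i) = i
        · rw [if_pos ⟨hτ, h1⟩]; exact Or.inr (Or.inl rfl)
        · rw [if_neg (fun hc => h1 hc.2)]; exact Or.inl rfl
      · -- τ i = false
        have c1 : ¬(τ i = true ∧ wit (r i) = i) := fun hc => by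
          rw [hτ] at hc; exact Bool.noConfusion hc.1
        rw [if_neg c1, Nat.zero_xor]
        by_cases h2 : wit (s i) = i <;> by_cases h3 : wit (t i) = i
        · rw [if_pos ⟨hτ, h2⟩, if_pos ⟨hτ, h3⟩, two_pow_xor (hst i)]
          exact Or.inr (Or.inr (Or.inl rfl))
        · rw [if_pos ⟨hτ, h2⟩, if_neg (fun hc => h3 hc.2), Nat.xor_zero]
          exact Or.inr (Or.inr (Or.inr (Or.inl rfl)))
        · rw [if_neg (fun hc => h2 hc.2), if_pos ⟨hτ, h3⟩, Nat.zero_xor]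
          exact Or.inr (Or.inr (Or.inr (Or.inr rfl)))
        · rw [if_neg (fun hc => h2 hc.2), if_neg (fun hc => h3 hc.2), Nat.xor_zero]
          exact Or.inl rfl
    · apply Nat.eq_of_testBit_eq
      intro j
      rw [testBit_xorSum, testBit_target]
      by_cases hj : 1 ≤ j ∧ j ≤ m
      · rw [decide_eq_true hj]
        apply bXorSum_eq_true _ (wit j)
        intro i
        rw [key i j]
        constructor
        · rintro (⟨-, hw, rfl⟩ | ⟨-, hw, rfl⟩ | ⟨-, hw, rfl⟩) <;> exact hw.symm
        · rintro rfl
          rcases hwit j hj.1 hj.2 with ⟨ht1, ht2⟩ | ⟨ht1, ht2 | ht2⟩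
          · exact Or.inl ⟨ht1, by rw [ht2], ht2.symm⟩
          · exact Or.inr (Or.inl ⟨ht1, by rw [ht2], ht2.symm⟩)
          · exact Or.inr (Or.inr ⟨ht1, by rw [ht2], ht2.symm⟩)
      · rw [decide_eq_false hj]
        apply bXorSum_eq_false
        intro i
        rw [Bool.eq_false_iff]
        intro hb
        rw [key i j] at hb
        rcases hb with ⟨-, -, rfl⟩ | ⟨-, -, rfl⟩ | ⟨-, -, rfl⟩
        · exact hj ⟨(hr i).1, (hr i).2⟩
        · exact hj ⟨(hs i).1, (hs i).2⟩
        · exact hj ⟨(ht i).1, (ht i).2⟩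
  · rintro ⟨l, hform, hsum⟩
    classical
    refine ⟨fun i => decide (l i = 2 ^ r i) && !decide (l i = 2 ^ s i) &&
      !decide (l i = 2 ^ t i), ?_⟩
    intro j h1 h2
    have hbit : bXorSum (fun i => (l i).testBit j) = true := by
      rw [← testBit_xorSum, hsum, testBit_target]
      exact decide_eq_true ⟨h1, h2⟩
    have hex : ∃ i, (l i).testBit j = true := by
      by_contra hc
      push_neg at hc
      rw [bXorSum_eq_false _ (fun i => Bool.eq_false_iff.mpr (hc i))] at hbit
      exact Bool.false_ne_true hbit
    obtain ⟨i, hi⟩ := hex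
    refine ⟨i, ?_⟩
    rcases hform i with h0 | hR | hST | hS | hT
    · rw [h0] at hi; exact absurd hi (by simp)
    · rw [hR, Nat.testBit_two_pow, decide_eq_true_eq] at hi
      by_cases hS' : l i = 2 ^ s i
      · refine Or.inr ⟨by simp only [decide_eq_true hS']; simp, Or.inl ?_⟩
        rw [← pow_eq_pow (hR ▸ hS' : (2:ℕ) ^ r i = 2 ^ s i)]
        exact hi
      by_cases hT' : l i = 2 ^ t i
      · refine Or.inr ⟨by simp only [decide_eq_true hT']; simp, Or.inr ?_⟩
        rw [← pow_eq_pow (hR ▸ hT' : (2:ℕ) ^ r i = 2 ^ t i)]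
        exact hi
      · exact Or.inl ⟨by simp only [decide_eq_true hR, decide_eq_false hS', decide_eq_false hT']; rfl, hi⟩
    · have hRne : l i ≠ 2 ^ r i := by
        intro hc
        rw [hST] at hc
        have hb1 : (2 ^ s i + 2 ^ t i).testBit (s i) = true :=
          (testBit_pow_add_iff (hst i) (s i)).mpr (Or.inl rfl)
        have hb2 : (2 ^ s i + 2 ^ t i).testBit (t i) = true :=
          (testBit_pow_add_iff (hst i) (t i)).mpr (Or.inr rfl)
        rw [hc, Nat.testBit_two_pow, decide_eq_true_eq] at hb1 hb2
        have := hst i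
        omega
      refine Or.inr ⟨by simp only [decide_eq_false hRne]; simp, ?_⟩
      rw [hST, testBit_pow_add_iff (hst i)] at hi
      rcases hi with rfl | rfl
      · exact Or.inl rfl
      · exact Or.inr rfl
    · refine Or.inr ⟨by simp only [decide_eq_true hS]; simp, Or.inl ?_⟩
      rw [hS, Nat.testBit_two_pow, decide_eq_true_eq] at hi
      exact hi
    · refine Or.inr ⟨by simp only [decide_eq_true hT]; simp, Or.inr ?_⟩
      rw [hT, Nat.testBit_two_pow, decide_eq_true_eq] at hi
      exact hi
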